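/- Let D be a Polish space, μ a probability measure on a measurable space (S, 𝒮), and Q₁, Q₂ probability kernels from S to D. If ∫_S (Q₁(s,·) × Q₂(s,·))(Δ) μ(ds) = 1, where Δ = {(y₁,y₂) ∈ D×D : y₁ = y₂} is the diagonal, then there exists a μ-null set N ∈ 𝒮 and a function k : S → D such that Q₁(s, {k(s)}) = Q₂(s, {k(s)}) = 1 for all s ∉ N. -/

import Mathlib

/-!
Integrating the product measure over the diagonal fibre by fibre gives
`(ν₁.prod ν₂) Δ = ∫⁻ y, ν₂ {y} ∂ν₁`. The integrand is at most `1`, so an integral equal to `1` forces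
`ν₂ {y} = 1` for `ν₁`-almost every `y`; a probability measure has at most one atom of full mass,
so that atom carries all of `ν₁` too. Applied to `Q₁ s` and `Q₂ s`, this happens for `μ`-almost
every `s`, and a choice of the atom gives `k`.
-/

open MeasureTheory ProbabilityTheory Set
open scoped ENNReal

namespace MeasureTheory

theorem ae_eq_one_of_lintegral_eq_one {α : Type*} [MeasurableSpace α] {μ : Measure α}
    [IsProbabilityMeasure μ] {f : α → ℝ≥0∞} (hf_le : ∀ᵐ x ∂μ, f x ≤ 1)
    (hf : ∫⁻ x, f x ∂μ = 1) : ∀ᵐ x ∂μ, f x = 1 :=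
  ae_eq_of_ae_le_of_lintegral_le hf_le (by simp [hf]) aemeasurable_const (by simp [hf])

variable {α : Type*} [MeasurableSpace α]

theorem eq_of_measure_singleton_eq_one (ν : Measure α) [IsProbabilityMeasure ν]
    [MeasurableSingletonClass α] {y z : α} (hy : ν {y} = 1) (hz : ν {z} = 1) : z = y := by
  by_contra hzy
  have hy_compl : ν {y}ᶜ = 0 := prob_compl_eq_zero_iff (measurableSet_singleton y) |>.mpr hy
  have : ν {z} = 0 := measure_mono_null (singleton_subset_iff.mpr hzy) hy_compl
  simp [hz] at this

theorem Measure.prod_diagonal_eq_lintegral [MeasurableEq α] (ν₁ ν₂ : Measure α) [SFinite ν₂] :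
    ν₁.prod ν₂ (diagonal α) = ∫⁻ y, ν₂ {y} ∂ν₁ := by
  rw [Measure.prod_apply measurableSet_diagonal]
  congr! with y
  ext z
  simp [eq_comm]

theorem exists_measure_singleton_eq_one_of_prod_diagonal_eq_one [MeasurableEq α]
    (ν₁ ν₂ : Measure α) [IsProbabilityMeasure ν₁] [IsProbabilityMeasure ν₂]
    (h : ν₁.prod ν₂ (diagonal α) = 1) : ∃ y, ν₁ {y} = 1 ∧ ν₂ {y} = 1 := by
  rw [Measure.prod_diagonal_eq_lintegral] at h
  have h_atoms : ∀ᵐ z ∂ν₁, ν₂ {z} = 1 :=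
    ae_eq_one_of_lintegral_eq_one (.of_forall fun _ ↦ prob_le_one) h
  obtain ⟨y, hy⟩ := h_atoms.exists
  have h_eq : ∀ᵐ z ∂ν₁, z = y := h_atoms.mono fun z hz ↦ eq_of_measure_singleton_eq_one ν₂ hy hz
  exact ⟨y, prob_compl_eq_zero_iff (measurableSet_singleton y) |>.mp h_eq, hy⟩

end MeasureTheory

/-- If the product kernels put full mass on the diagonal in integral (i.e. on
μ-average), then outside a μ-null set there is a common full-mass atom `k s`
of both kernels. -/
theorem exists_selection_of_integral_prod_diagonal_eq_one
    {S D : Type*} [MeasurableSpace S] [MeasurableSpace D]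
    [TopologicalSpace D] [PolishSpace D] [BorelSpace D]
    (μ : Measure S) [IsProbabilityMeasure μ]
    (Q₁ Q₂ : Kernel S D) [IsMarkovKernel Q₁] [IsMarkovKernel Q₂]
    (h : ∫⁻ s, ((Q₁ s).prod (Q₂ s)) {p : D × D | p.1 = p.2} ∂μ = 1) :
    ∃ (N : Set S) (k : S → D), MeasurableSet N ∧ μ N = 0 ∧
      ∀ s ∉ N, Q₁ s {k s} = 1 ∧ Q₂ s {k s} = 1 := by
  set f : S → ℝ≥0∞ := fun s ↦ (Q₁ s).prod (Q₂ s) (diagonal D)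
  have hf_meas : Measurable f := by
    simpa only [Kernel.prod_apply] using Kernel.measurable_coe (Q₁ ×ₖ Q₂) measurableSet_diagonal
  have hf_ae : ∀ᵐ s ∂μ, f s = 1 :=
    ae_eq_one_of_lintegral_eq_one (.of_forall fun _ ↦ prob_le_one) h
  have h_atom (s : S) : ∃ y, f s = 1 → Q₁ s {y} = 1 ∧ Q₂ s {y} = 1 := by
    by_cases hs : f s = 1
    · obtain ⟨y, hy⟩ := exists_measure_singleton_eq_one_of_prod_diagonal_eq_one _ _ hs
      exact ⟨y, fun _ ↦ hy⟩
    · exact ⟨(nonempty_of_isProbabilityMeasure (Q₁ s)).some, fun h ↦ absurd h hs⟩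
  choose k hk using h_atom
  exact ⟨{s | f s = 1}ᶜ, k, (measurableSet_eq_fun hf_meas measurable_const).compl, hf_ae,
    fun s hs ↦ hk s (not_not.mp hs)⟩
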